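/- Let n ≥ 3 and let 0 ≤ i ≤ ⌊(n−1)/2⌋ − 1. Then the number p_{n,i} of sets S ∈ P_n with |S| = i + 1 equals ((n − 2i − 2)/(i + 1)) · C(n−1, i). -/

import Mathlib

open Finset Polynomial

/-- `σ` is a permutation of `[n] = {1, …, n}` (viewed as a function `ℕ → ℕ`
restricted to a bijection of `{1, …, n}` onto itself). -/
def IsPermOn (n : ℕ) (σ : ℕ → ℕ) : Prop :=
  Set.BijOn σ (Set.Icc 1 n) (Set.Icc 1 n)

/-- The circular peak set of `σ` (as a permutation of `[n]`):
`CP(σ) = {σ(i) : 2 ≤ i ≤ n−1, σ(i−1) < σ(i) > σ(i+1)}`. -/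
def CP (n : ℕ) (σ : ℕ → ℕ) : Finset ℕ :=
  ((Finset.Icc 2 (n - 1)).filter (fun i => σ (i - 1) < σ i ∧ σ (i + 1) < σ i)).image σ

open scoped Classical in
/-- `Pn n` is the collection of all subsets `S ⊆ [n]` arising as the circular peak
set of some permutation of `[n]`. -/
noncomputable def Pn (n : ℕ) : Finset (Finset ℕ) :=
  (Finset.Icc 1 n).powerset.filter (fun S => ∃ σ : ℕ → ℕ, IsPermOn n σ ∧ CP n σ = S)

/-- `pcount n k` is the number of members of `Pn n` of cardinality `k`;
in the paper's notation, `p_{n,i} = pcount n (i+1)`. -/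
noncomputable def pcount (n k : ℕ) : ℕ :=
  ((Pn n).filter (fun S => S.card = k)).card

/-- The f-polynomial `P_n(x) = Σ_{i=0}^{⌊(n−1)/2⌋} p_{n,i−1} x^{⌊(n−1)/2⌋−i}`. -/
noncomputable def fpoly (n : ℕ) : Polynomial ℚ :=
  ∑ i ∈ Finset.range ((n - 1) / 2 + 1),
    Polynomial.C (pcount n i : ℚ) * Polynomial.X ^ ((n - 1) / 2 - i)


/-!
A set `S ⊆ [n]` is a circular peak set iff it satisfies the ballot condition: every `x ∈ S`
is at least `2r + 3`, where `r` is the number of smaller elements of `S`. Necessity holds because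
each peak has a smaller right neighbour and the leftmost peak also a smaller left one. Sufficiency
follows by induction on `n`: the largest value `n` is appended at the end when `n ∉ S`, and
otherwise inserted between two adjacent non-peak positions, which exist because peaks are sparse.
Removing `n` then gives the Pascal recursion `f(n+1, k+1) = f(n, k+1) + f(n, k)` for
`2k + 2 ≤ n`, solved by the ballot numbers `n · f(n, k) = (n - 2k) · C(n, k)`.
-/

abbrev IsPeak (σ : ℕ → ℕ) (i : ℕ) : Prop :=
  σ (i - 1) < σ i ∧ σ (i + 1) < σ i

def peakPos (n : ℕ) (σ : ℕ → ℕ) : Finset ℕ :=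
  (Icc 2 (n - 1)).filter (IsPeak σ)

theorem CP_eq_image_peakPos (n : ℕ) (σ : ℕ → ℕ) : CP n σ = (peakPos n σ).image σ := rfl

theorem mem_peakPos {n : ℕ} {σ : ℕ → ℕ} {i : ℕ} :
    i ∈ peakPos n σ ↔ (2 ≤ i ∧ i ≤ n - 1) ∧ IsPeak σ i := by
  rw [peakPos, mem_filter, mem_Icc]

theorem IsPeak.not_isPeak_add_one {σ : ℕ → ℕ} {i : ℕ} (h : IsPeak σ i) : ¬IsPeak σ (i + 1) := by
  intro h'
  simp only [IsPeak, Nat.add_sub_cancel] at h'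
  exact (h.2.trans h'.1).false

theorem IsPermOn.injOn_peakPos {n : ℕ} {σ : ℕ → ℕ} (hσ : IsPermOn n σ) :
    Set.InjOn σ (peakPos n σ) :=
  hσ.injOn.mono fun i hi => by
    have := (mem_peakPos.1 hi).1
    exact Set.mem_Icc.2 (by omega)

theorem IsPermOn.card_CP {n : ℕ} {σ : ℕ → ℕ} (hσ : IsPermOn n σ) :
    #(CP n σ) = #(peakPos n σ) :=
  card_image_of_injOn hσ.injOn_peakPos

def IsBallot (S : Finset ℕ) : Prop :=
  ∀ x ∈ S, 2 * #{y ∈ S | y < x} + 3 ≤ x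

instance : DecidablePred IsBallot := fun S => by unfold IsBallot; infer_instance

theorem card_insert_pred_min'_union_image_succ (T : Finset ℕ) (hT : T.Nonempty)
    (hpos : ∀ p ∈ T, 1 ≤ p) (hsep : ∀ p ∈ T, p + 1 ∉ T) :
    #(insert (T.min' hT - 1) (T ∪ T.image (· + 1))) = 2 * #T + 1 := by
  have hmin := T.min'_mem hT
  have hdisj : Disjoint T (T.image (· + 1)) := by
    simp only [disjoint_left, mem_image, not_exists, not_and]
    rintro _ hp q hq rfl
    exact hsep q hq hp
  have hnot : T.min' hT - 1 ∉ T ∪ T.image (· + 1) := by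
    simp only [mem_union, mem_image, not_or, not_exists, not_and]
    have := hpos _ hmin
    refine ⟨fun h => ?_, fun q hq hqm => ?_⟩
    · have := T.min'_le _ h; omega
    · have := T.min'_le _ hq; omega
  rw [card_insert_of_notMem hnot, card_union_of_disjoint hdisj,
    card_image_of_injective _ (add_left_injective 1)]
  ring

/-- The peaks `σ p ≤ x`, their right neighbours and the left neighbour of the leftmost one are
`2r + 3` distinct positions carrying values `≤ x`. -/
theorem IsPermOn.isBallot_CP {n : ℕ} {σ : ℕ → ℕ} (hσ : IsPermOn n σ) : IsBallot (CP n σ) := by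
  intro x hx
  obtain ⟨q, hq, rfl⟩ := mem_image.1 hx
  set T := insert q ((peakPos n σ).filter (σ · < σ q))
  have hTpeak : T ⊆ peakPos n σ := insert_subset hq (filter_subset _ _)
  have hTle : ∀ p ∈ T, σ p ≤ σ q := by
    simp only [T, mem_insert, mem_filter]
    rintro p (rfl | ⟨-, hp⟩) <;> omega
  have hcard : #T = #{y ∈ CP n σ | y < σ q} + 1 := by
    rw [card_insert_of_notMem (by simp), CP_eq_image_peakPos, filter_image,
      card_image_of_injOn (hσ.injOn_peakPos.mono (filter_subset _ _))]
  have hTrange : ∀ p ∈ T, 2 ≤ p ∧ p ≤ n - 1 := fun p hp => (mem_peakPos.1 (hTpeak hp)).1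
  have hTne : T.Nonempty := insert_nonempty _ _
  set U := insert (T.min' hTne - 1) (T ∪ T.image (· + 1))
  have hUcard : #U = 2 * #T + 1 :=
    card_insert_pred_min'_union_image_succ T hTne (fun p hp => by have := hTrange p hp; omega)
      fun p hp hp1 =>
        (mem_peakPos.1 (hTpeak hp)).2.not_isPeak_add_one (mem_peakPos.1 (hTpeak hp1)).2
  have hUrange : ∀ u ∈ U, u ∈ Set.Icc 1 n := by
    simp only [U, mem_insert, mem_union, mem_image, Set.mem_Icc]
    rintro u (rfl | hu | ⟨p, hp, rfl⟩)
    · have := hTrange _ (T.min'_mem hTne); omega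
    · have := hTrange u hu; omega
    · have := hTrange p hp; omega
  have hUle : ∀ u ∈ U, σ u ≤ σ q := by
    simp only [U, mem_insert, mem_union, mem_image]
    rintro u (rfl | hu | ⟨p, hp, rfl⟩)
    · exact ((mem_peakPos.1 (hTpeak (T.min'_mem hTne))).2.1.le).trans (hTle _ (T.min'_mem hTne))
    · exact hTle u hu
    · exact ((mem_peakPos.1 (hTpeak hp)).2.2.le).trans (hTle p hp)
  have hUimage : U.image σ ⊆ Icc 1 (σ q) := by
    simp only [subset_iff, mem_image, mem_Icc]
    rintro _ ⟨u, hu, rfl⟩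
    exact ⟨(Set.mem_Icc.1 (hσ.mapsTo (hUrange u hu))).1, hUle u hu⟩
  have := card_le_card hUimage
  rw [card_image_of_injOn (hσ.injOn.mono hUrange), Nat.card_Icc, hUcard, hcard] at this
  omega

def insertAt (σ : ℕ → ℕ) (j m : ℕ) : ℕ → ℕ :=
  fun p => if p ≤ j then σ p else if p = j + 1 then m else σ (p - 1)

section insertAt

variable {σ : ℕ → ℕ} {j m p : ℕ}

theorem insertAt_of_le (h : p ≤ j) : insertAt σ j m p = σ p := if_pos h

theorem insertAt_succ : insertAt σ j m (j + 1) = m := by simp [insertAt]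

theorem insertAt_add_one_of_lt (h : j < p) : insertAt σ j m (p + 1) = σ p := by
  simp [insertAt, show ¬p + 1 ≤ j by omega, show p ≠ j by omega]

theorem isPeak_insertAt_iff_of_lt (h : p < j) : IsPeak (insertAt σ j m) p ↔ IsPeak σ p := by
  simp only [IsPeak, insertAt_of_le (show p - 1 ≤ j by omega), insertAt_of_le h.le,
    insertAt_of_le (show p + 1 ≤ j by omega)]

theorem isPeak_insertAt_add_one_iff (h : j + 1 < p) :
    IsPeak (insertAt σ j m) (p + 1) ↔ IsPeak σ p := by
  obtain ⟨p, rfl⟩ : ∃ q, p = q + 1 := ⟨p - 1, by omega⟩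
  simp only [IsPeak, Nat.add_sub_cancel, insertAt_add_one_of_lt (show j < p by omega),
    insertAt_add_one_of_lt (show j < p + 1 by omega),
    insertAt_add_one_of_lt (show j < p + 1 + 1 by omega)]

end insertAt

theorem isPermOn_insertAt {n j : ℕ} {σ : ℕ → ℕ} (hσ : IsPermOn n σ) (hj : j ≤ n) :
    IsPermOn (n + 1) (insertAt σ j (n + 1)) := by
  have hmaps : Set.MapsTo (insertAt σ j (n + 1)) (Set.Icc 1 (n + 1)) (Set.Icc 1 (n + 1)) := by
    intro p hp
    rw [Set.mem_Icc] at hp ⊢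
    obtain hpj | rfl | hpj := (show p ≤ j ∨ p = j + 1 ∨ j + 1 < p by omega)
    · obtain ⟨h1, h2⟩ := hσ.mapsTo (show p ∈ Set.Icc 1 n from ⟨hp.1, by omega⟩)
      rw [insertAt_of_le hpj]; exact ⟨h1, by omega⟩
    · rw [insertAt_succ]; omega
    · obtain ⟨p, rfl⟩ : ∃ q, p = q + 1 := ⟨p - 1, by omega⟩
      obtain ⟨h1, h2⟩ := hσ.mapsTo (show p ∈ Set.Icc 1 n from ⟨by omega, by omega⟩)
      rw [insertAt_add_one_of_lt (by omega)]; exact ⟨h1, by omega⟩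
  refine ((Set.finite_Icc 1 (n + 1)).surjOn_iff_bijOn_of_mapsTo hmaps).1 fun y hy => ?_
  rw [Set.mem_Icc] at hy
  by_cases hyn : y = n + 1
  · exact ⟨j + 1, ⟨by omega, by omega⟩, hyn ▸ insertAt_succ⟩
  obtain ⟨p, hp, rfl⟩ := hσ.surjOn (show y ∈ Set.Icc 1 n from ⟨hy.1, by omega⟩)
  rw [Set.mem_Icc] at hp
  by_cases hpj : p ≤ j
  · exact ⟨p, ⟨hp.1, by omega⟩, insertAt_of_le hpj⟩
  · exact ⟨p + 1, ⟨by omega, by omega⟩, insertAt_add_one_of_lt (by omega)⟩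

theorem mem_CP_insertAt {n j x : ℕ} {σ : ℕ → ℕ} (hσ : Set.MapsTo σ (Set.Icc 1 n) (Set.Icc 1 n))
    (hj : j ≤ n) (hjpeak : j ∉ peakPos n σ) (hj1peak : j + 1 ∉ peakPos n σ) :
    x ∈ CP (n + 1) (insertAt σ j (n + 1)) ↔ x ∈ CP n σ ∨ (x = n + 1 ∧ 1 ≤ j ∧ j < n) := by
  have hle : ∀ p, 1 ≤ p → p ≤ n → σ p < n + 1 := fun p h1 h2 =>
    Nat.lt_succ_of_le (hσ ⟨h1, h2⟩).2
  simp only [CP_eq_image_peakPos, mem_image, mem_peakPos] at hjpeak hj1peak ⊢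
  constructor
  · rintro ⟨p, ⟨hp, hpeak⟩, rfl⟩
    obtain hpj | rfl | rfl | rfl | hpj :=
      (show p < j ∨ p = j ∨ p = j + 1 ∨ p = j + 2 ∨ j + 2 < p by omega)
    · rw [isPeak_insertAt_iff_of_lt hpj] at hpeak
      exact Or.inl ⟨p, ⟨⟨hp.1, by omega⟩, hpeak⟩, (insertAt_of_le hpj.le).symm⟩
    · have := hpeak.2
      rw [insertAt_succ, insertAt_of_le le_rfl] at this
      exact absurd this (hle p (by omega) (by omega)).not_gt
    · exact Or.inr ⟨insertAt_succ, by omega, by omega⟩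
    · have := hpeak.1
      rw [show j + 2 - 1 = j + 1 by omega, insertAt_succ, insertAt_add_one_of_lt (by omega)] at this
      exact absurd this (hle (j + 1) (by omega) (by omega)).not_gt
    · obtain ⟨p, rfl⟩ : ∃ q, p = q + 1 := ⟨p - 1, by omega⟩
      rw [isPeak_insertAt_add_one_iff (by omega)] at hpeak
      exact Or.inl ⟨p, ⟨⟨by omega, by omega⟩, hpeak⟩, (insertAt_add_one_of_lt (by omega)).symm⟩
  · rintro (⟨p, ⟨hp, hpeak⟩, rfl⟩ | ⟨rfl, hj1, hjn⟩)
    · by_cases hpj : p < j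
      · exact ⟨p, ⟨⟨hp.1, by omega⟩, (isPeak_insertAt_iff_of_lt hpj).2 hpeak⟩,
          insertAt_of_le hpj.le⟩
      · have hpj : j + 1 < p := by
          by_contra
          obtain rfl | rfl := (show p = j ∨ p = j + 1 by omega)
          exacts [hjpeak ⟨hp, hpeak⟩, hj1peak ⟨hp, hpeak⟩]
        exact ⟨p + 1, ⟨⟨by omega, by omega⟩, (isPeak_insertAt_add_one_iff hpj).2 hpeak⟩,
          insertAt_add_one_of_lt (by omega)⟩
    · refine ⟨j + 1, ⟨⟨by omega, by omega⟩, ?_, ?_⟩, insertAt_succ⟩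
      · rw [Nat.add_sub_cancel, insertAt_succ, insertAt_of_le le_rfl]
        exact hle j hj1 hj
      · rw [insertAt_succ, insertAt_add_one_of_lt (by omega)]
        exact hle (j + 1) (by omega) (by omega)

theorem exists_notMem_and_add_one_notMem (P : Finset ℕ) {m : ℕ} (h : 2 * #P < m) :
    ∃ j, 1 ≤ j ∧ j ≤ m ∧ j ∉ P ∧ j + 1 ∉ P := by
  by_contra! hcover
  have hsub : Icc 1 m ⊆ P ∪ P.image (· - 1) := by
    intro j hj
    rw [mem_Icc] at hj
    rw [mem_union, mem_image]
    by_cases hjP : j ∈ P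
    · exact Or.inl hjP
    · exact Or.inr ⟨j + 1, hcover j hj.1 hj.2 hjP, Nat.add_one_sub_one j⟩
  have := (card_le_card hsub).trans ((card_union_le _ _).trans (add_le_add_right card_image_le _))
  rw [Nat.card_Icc] at this
  omega

theorem isBallot_insert_iff {T : Finset ℕ} {m : ℕ} (hT : ∀ y ∈ T, y < m) :
    IsBallot (insert m T) ↔ IsBallot T ∧ 2 * #T + 3 ≤ m := by
  have hbelow : ∀ x ∈ T, {y ∈ insert m T | y < x} = {y ∈ T | y < x} := fun x hx => by
    rw [filter_insert, if_neg (hT x hx).not_gt]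
  have htop : {y ∈ insert m T | y < m} = T := by
    rw [filter_insert, if_neg (lt_irrefl m), filter_true_of_mem hT]
  rw [IsBallot, forall_mem_insert, htop, and_comm]
  refine and_congr_left' (forall₂_congr fun x hx => ?_)
  rw [hbelow x hx]

theorem subset_Icc_of_add_one_notMem {n : ℕ} {S : Finset ℕ} (hS : S ⊆ Icc 1 (n + 1))
    (hn : n + 1 ∉ S) : S ⊆ Icc 1 n := fun y hy => by
  have := mem_Icc.1 (hS hy)
  exact mem_Icc.2 ⟨this.1, by grind⟩

theorem exists_isPermOn_CP_eq : ∀ {n : ℕ} {S : Finset ℕ}, S ⊆ Icc 1 n → IsBallot S →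
    ∃ σ, IsPermOn n σ ∧ CP n σ = S
  | 0, S, hS, _ => ⟨id, Set.bijOn_id _, by simp_all [CP]⟩
  | n + 1, S, hS, hb => by
    by_cases hn : n + 1 ∈ S
    · obtain ⟨T, hT, rfl⟩ : ∃ T, n + 1 ∉ T ∧ S = insert (n + 1) T :=
        ⟨S.erase (n + 1), notMem_erase _ _, (insert_erase hn).symm⟩
      have hsub := subset_Icc_of_add_one_notMem ((subset_insert _ _).trans hS) hT
      rw [isBallot_insert_iff fun y hy => Nat.lt_succ_of_le (mem_Icc.1 (hsub hy)).2] at hb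
      obtain ⟨σ, hσ, hCP⟩ := exists_isPermOn_CP_eq hsub hb.1
      obtain ⟨j, hj1, hjn, hjpeak, hj1peak⟩ :=
        exists_notMem_and_add_one_notMem (peakPos n σ) (m := n - 1)
          (by rw [← hσ.card_CP, hCP]; omega)
      refine ⟨insertAt σ j (n + 1), isPermOn_insertAt hσ (by omega), ?_⟩
      ext x
      rw [mem_CP_insertAt hσ.mapsTo (by omega) hjpeak hj1peak, hCP, mem_insert]
      grind
    · obtain ⟨σ, hσ, hCP⟩ := exists_isPermOn_CP_eq (subset_Icc_of_add_one_notMem hS hn) hb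
      have hnotpeak : ∀ p, n ≤ p → p ∉ peakPos n σ := fun p hp h => by
        have := (mem_peakPos.1 h).1
        omega
      refine ⟨insertAt σ n (n + 1), isPermOn_insertAt hσ le_rfl, ?_⟩
      ext x
      rw [mem_CP_insertAt hσ.mapsTo le_rfl (hnotpeak n le_rfl) (hnotpeak (n + 1) (by omega)), hCP]
      simp

theorem mem_Pn_iff {n : ℕ} {S : Finset ℕ} : S ∈ Pn n ↔ S ⊆ Icc 1 n ∧ IsBallot S := by
  simp only [Pn, Finset.mem_filter, mem_powerset]
  exact and_congr_right fun hS =>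
    ⟨fun ⟨σ, hσ, hCP⟩ => hCP ▸ hσ.isBallot_CP, exists_isPermOn_CP_eq hS⟩

def ballotSets (n k : ℕ) : Finset (Finset ℕ) :=
  ((Icc 1 n).powersetCard k).filter IsBallot

theorem pcount_eq_card_ballotSets (n k : ℕ) : pcount n k = #(ballotSets n k) := by
  rw [pcount, ballotSets]
  congr 1
  ext S
  simp only [mem_filter, mem_powersetCard, mem_Pn_iff]
  tauto

theorem ballotSets_zero (n : ℕ) : ballotSets n 0 = {∅} := by
  simp [ballotSets, IsBallot]

theorem ballotSets_eq_empty {n k : ℕ} (hk : k ≠ 0) (hn : n < 2 * k + 1) : ballotSets n k = ∅ := by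
  refine eq_empty_of_forall_notMem fun S hS => ?_
  simp only [ballotSets, mem_filter, mem_powersetCard] at hS
  obtain ⟨⟨hsub, rfl⟩, hb⟩ := hS
  have hne : S.Nonempty := card_ne_zero.1 hk
  have hmax := S.max'_mem hne
  have hbelow : {y ∈ S | y < S.max' hne} = S.erase (S.max' hne) := by
    ext y
    simp only [mem_filter, mem_erase]
    exact ⟨fun h => ⟨h.2.ne, h.1⟩, fun h => ⟨h.2, lt_of_le_of_ne (S.le_max' y h.2) h.1⟩⟩
  have := hb _ hmax
  rw [hbelow, card_erase_of_mem hmax] at this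
  have := (mem_Icc.1 (hsub hmax)).2
  omega

theorem card_ballotSets_succ {n k : ℕ} (h : 2 * k + 2 ≤ n) :
    #(ballotSets (n + 1) (k + 1)) = #(ballotSets n (k + 1)) + #(ballotSets n k) := by
  have hnot : n + 1 ∉ Icc 1 n := by simp
  have hlt : ∀ T ∈ (Icc 1 n).powersetCard k, ∀ y ∈ T, y < n + 1 := fun T hT y hy => by
    have := mem_Icc.1 ((mem_powersetCard.1 hT).1 hy)
    omega
  rw [ballotSets, ← insert_Icc_right_eq_Icc_add_one (by omega), powersetCard_succ_insert hnot,
    filter_union, filter_image, card_union_of_disjoint, card_image_of_injOn]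
  · congr 1
    refine congrArg card (filter_congr fun T hT => ?_)
    rw [isBallot_insert_iff (hlt T hT), (mem_powersetCard.1 hT).2]
    exact and_iff_left (by omega)
  · intro T₁ hT₁ T₂ hT₂ heq
    have h₁ : n + 1 ∉ T₁ := fun h => (hlt T₁ (mem_filter.1 hT₁).1 _ h).false
    have h₂ : n + 1 ∉ T₂ := fun h => (hlt T₂ (mem_filter.1 hT₂).1 _ h).false
    rw [← erase_insert h₁, ← erase_insert h₂]
    exact congrArg (·.erase (n + 1)) heq
  · simp only [disjoint_left, mem_filter, mem_powersetCard, mem_image]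
    rintro _ ⟨⟨hsub, -⟩, -⟩ ⟨T, -, rfl⟩
    exact hnot (hsub (mem_insert_self _ _))

theorem mul_card_ballotSets : ∀ n k : ℕ, n * #(ballotSets n k) = (n - 2 * k) * n.choose k
  | n, 0 => by simp [ballotSets_zero]
  | 0, k + 1 => by simp [ballotSets]
  | n + 1, k + 1 => by
    by_cases h : 2 * k + 2 ≤ n
    · obtain ⟨d, rfl⟩ : ∃ d, n = 2 * k + 2 + d := ⟨n - (2 * k + 2), by omega⟩
      have ih₁ := mul_card_ballotSets (2 * k + 2 + d) (k + 1)
      have ih₂ := mul_card_ballotSets (2 * k + 2 + d) k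
      have hchoose := Nat.choose_succ_right_eq (2 * k + 2 + d) k
      rw [show 2 * k + 2 + d - 2 * (k + 1) = d by omega] at ih₁
      rw [show 2 * k + 2 + d - 2 * k = d + 2 by omega] at ih₂
      rw [show 2 * k + 2 + d - k = k + 2 + d by omega] at hchoose
      rw [card_ballotSets_succ h, Nat.choose_succ_succ',
        show 2 * k + 2 + d + 1 - 2 * (k + 1) = d + 1 by omega]
      refine Nat.eq_of_mul_eq_mul_left (show 0 < 2 * k + 2 + d by omega) ?_
      zify at ih₁ ih₂ hchoose ⊢
      linear_combination (2 * k + 2 + d + 1 : ℤ) * (ih₁ + ih₂) - 2 * hchoose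
    · rw [ballotSets_eq_empty k.succ_ne_zero (by omega), show n + 1 - 2 * (k + 1) = 0 by omega]
      simp

theorem Pn_face_count_general (n i : ℕ) (hi : i + 1 ≤ (n - 1) / 2) :
    (pcount n (i + 1) : ℚ) =
      ((n : ℚ) - 2 * i - 2) / (i + 1) * (Nat.choose (n - 1) i : ℚ) := by
  obtain ⟨d, rfl⟩ : ∃ d, n = 2 * i + 2 + d + 1 := ⟨n - (2 * i + 3), by omega⟩
  have hcount := mul_card_ballotSets (2 * i + 2 + d + 1) (i + 1)
  rw [show 2 * i + 2 + d + 1 - 2 * (i + 1) = d + 1 by omega] at hcount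
  have hchoose := Nat.add_one_mul_choose_eq (2 * i + 2 + d) i
  rw [pcount_eq_card_ballotSets, Nat.add_sub_cancel]
  have hN : (2 * i + 2 + d + 1 : ℚ) ≠ 0 := by positivity
  have hmul : (#(ballotSets (2 * i + 2 + d + 1) (i + 1)) : ℚ) * (i + 1) =
      (d + 1) * (2 * i + 2 + d).choose i := by
    refine mul_left_cancel₀ hN ?_
    qify at hcount hchoose
    linear_combination (↑i + 1 : ℚ) * hcount - (↑d + 1 : ℚ) * hchoose
  push_cast
  field_simp
  linear_combination hmul

/-- Corollary 3.1: for `0 ≤ i ≤ ⌊(n−1)/2⌋ − 1`, the number `p_{n,i}` of members of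
`P_n` of cardinality `i+1` equals `((n − 2i − 2)/(i + 1)) · C(n−1, i)`. -/
theorem Pn_face_count (n i : ℕ) (hn : 3 ≤ n) (hi : i + 1 ≤ (n - 1) / 2) :
    (pcount n (i + 1) : ℚ) =
      ((n : ℚ) - 2 * i - 2) / (i + 1) * (Nat.choose (n - 1) i : ℚ) :=
  Pn_face_count_general n i hi
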